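/- For existentially quantified formulas, validation is strictly stronger than entailment even for tautology-free CNF matrices: there exist disjoint atom sets A, B, a tautology-free CNF formula ψ over A∪B, and a partial truth assignment μ on A such that μ entails ∃B.ψ but μ does not validate ∃B.ψ. Concretely, take A = {A₁, A₂}, B = {B₁, B₂}, μ = {A₁ ↦ true}, and ψ = (B₁ ∨ B₂) ∧ (¬B₁ ∨ A₁) ∧ (¬B₁ ∨ A₂) ∧ (B₁ ∨ ¬A₁ ∨ ¬A₂) ∧ (¬B₂ ∨ A₁) ∧ (¬B₂ ∨ ¬A₂) ∧ (B₂ ∨ ¬A₁ ∨ A₂): then μ entails ∃B.ψ and μ does not validate ∃B.ψ. -/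

import Mathlib

/-- Propositional formulas over a set of atoms `α`, built from the constants
`⊤`/`⊥`, atoms, negation, conjunction and disjunction
(implication and bi-implication being the standard abbreviations). -/
inductive PropForm (α : Type) : Type
  | tr : PropForm α
  | fls : PropForm α
  | atom : α → PropForm α
  | neg : PropForm α → PropForm α
  | conj : PropForm α → PropForm α → PropForm α
  | disj : PropForm α → PropForm α → PropForm α

namespace PropForm

variable {α β : Type}

/-- Standard two-valued semantics under a total truth assignment. -/
def eval (η : α → Bool) : PropForm α → Bool
  | tr => true
  | fls => false
  | atom a => η a
  | neg φ => !(eval η φ)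
  | conj φ ψ => eval η φ && eval η ψ
  | disj φ ψ => eval η φ || eval η ψ

/-- Three-valued (Kleene) evaluation under a partial truth assignment
(`none` = unknown). -/
def eval3 (μ : α → Option Bool) : PropForm α → Option Bool
  | tr => some true
  | fls => some false
  | atom a => μ a
  | neg φ => Option.map not (eval3 μ φ)
  | conj φ ψ =>
      match eval3 μ φ, eval3 μ ψ with
      | some false, _ => some false
      | _, some false => some false
      | some true, some true => some true
      | _, _ => none
  | disj φ ψ =>
      match eval3 μ φ, eval3 μ ψ with
      | some true, _ => some true
      | _, some true => some true
      | some false, some false => some false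
      | _, _ => none

/-- Simplifying negation: `¬⊤ ⇒ ⊥`, `¬⊥ ⇒ ⊤`. -/
def mkNeg : PropForm α → PropForm α
  | tr => fls
  | fls => tr
  | φ => neg φ

/-- Simplifying conjunction: `⊤∧φ ⇒ φ`, `⊥∧φ ⇒ ⊥`, `φ∧⊤ ⇒ φ`, `φ∧⊥ ⇒ ⊥`. -/
def mkConj : PropForm α → PropForm α → PropForm α
  | tr, ψ => ψ
  | fls, _ => fls
  | φ, tr => φ
  | _, fls => fls
  | φ, ψ => conj φ ψ

/-- Simplifying disjunction: `⊤∨φ ⇒ ⊤`, `⊥∨φ ⇒ φ`, `φ∨⊤ ⇒ ⊤`, `φ∨⊥ ⇒ φ`. -/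
def mkDisj : PropForm α → PropForm α → PropForm α
  | tr, _ => tr
  | fls, ψ => ψ
  | _, tr => tr
  | φ, fls => φ
  | φ, ψ => disj φ ψ

/-- The residual `φ|_μ` of `φ` under a partial assignment `μ`: substitute every
assigned atom with the constant `⊤`/`⊥` given by `μ` and recursively apply the
standard truth-value propagation rules. -/
def residual (μ : α → Option Bool) : PropForm α → PropForm α
  | tr => tr
  | fls => fls
  | atom a =>
      match μ a with
      | some true => tr
      | some false => fls
      | none => atom a
  | neg φ => mkNeg (residual μ φ)
  | conj φ ψ => mkConj (residual μ φ) (residual μ ψ)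
  | disj φ ψ => mkDisj (residual μ φ) (residual μ ψ)

/-- The total assignment `η` extends the partial assignment `μ`. -/
def Extends (μ : α → Option Bool) (η : α → Bool) : Prop :=
  ∀ a b, μ a = some b → η a = b

/-- View a total assignment as a partial one. -/
def totalize (η : α → Bool) : α → Option Bool := fun a => some (η a)

/-- The partial assignment `μ` *entails* `φ` (`μ ⊨ φ`): every total
assignment extending `μ` satisfies `φ`. -/
def Entails (μ : α → Option Bool) (φ : PropForm α) : Prop :=
  ∀ η : α → Bool, Extends μ η → eval η φ = true

/-- The partial assignment `μ` *validates* `φ` (`μ ⊢ φ`): the residual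
`φ|_μ` is syntactically `⊤`. -/
def Validates (μ : α → Option Bool) (φ : PropForm α) : Prop :=
  residual μ φ = tr

/-- `φ` is valid: every total assignment satisfies it. -/
def Valid (φ : PropForm α) : Prop :=
  ∀ η : α → Bool, eval η φ = true

/-- Big disjunction `⋁` of a list of formulas. -/
def bigDisj : List (PropForm α) → PropForm α
  | [] => fls
  | [φ] => φ
  | φ :: rest => disj φ (bigDisj rest)

/-- Big conjunction `⋀` of a list of formulas. -/
def bigConj : List (PropForm α) → PropForm α
  | [] => tr
  | [φ] => φ
  | φ :: rest => conj φ (bigConj rest)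

/-- The cube `⋀μ` of a partial assignment `μ`: the conjunction of the literals
`A` with `μ A = true` and `¬A` with `μ A = false`. -/
noncomputable def cubeOf [Fintype α] (μ : α → Option Bool) : PropForm α :=
  bigConj ((Finset.univ : Finset α).toList.filterMap fun a =>
    match μ a with
    | some true => some (atom a)
    | some false => some (neg (atom a))
    | none => none)

/-- `φ` is a literal: an atom or the negation of an atom. -/
def IsLit : PropForm α → Prop
  | atom _ => True
  | neg (atom _) => True
  | _ => False

/-- `φ` is a clause: a disjunction of literals. -/
inductive IsClause : PropForm α → Prop
  | lit {φ : PropForm α} : IsLit φ → IsClause φ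
  | disj {φ ψ : PropForm α} : IsClause φ → IsClause ψ → IsClause (PropForm.disj φ ψ)

/-- `φ` is a cube: a conjunction of literals. -/
inductive IsCube : PropForm α → Prop
  | lit {φ : PropForm α} : IsLit φ → IsCube φ
  | conj {φ ψ : PropForm α} : IsCube φ → IsCube ψ → IsCube (PropForm.conj φ ψ)

/-- `φ` is in CNF: a conjunction of clauses. -/
inductive IsCNF : PropForm α → Prop
  | clause {φ : PropForm α} : IsClause φ → IsCNF φ
  | conj {φ ψ : PropForm α} : IsCNF φ → IsCNF ψ → IsCNF (PropForm.conj φ ψ)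

/-- The clauses of a CNF formula. -/
def clauses : PropForm α → List (PropForm α)
  | conj φ ψ => clauses φ ++ clauses ψ
  | φ => [φ]

/-- The (signed) literals of a clause: `(true, a)` for the positive literal `a`,
`(false, a)` for the negative literal `¬a`. -/
def lits : PropForm α → List (Bool × α)
  | atom a => [(true, a)]
  | neg (atom a) => [(false, a)]
  | disj φ ψ => lits φ ++ lits ψ
  | _ => []

/-- A CNF formula is tautology-free iff no clause of it contains both an atom
and its negation. -/
def TautologyFree (φ : PropForm α) : Prop :=
  ∀ c ∈ clauses φ, ¬ ∃ a, (true, a) ∈ lits c ∧ (false, a) ∈ lits c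

/-- The atoms occurring in a formula. -/
def atoms : PropForm α → List α
  | tr => []
  | fls => []
  | atom a => [a]
  | neg φ => atoms φ
  | conj φ ψ => atoms φ ++ atoms ψ
  | disj φ ψ => atoms φ ++ atoms ψ

/-- Residual of a formula over `α ⊕ β` under a total assignment on the
`β`-atoms: the resulting formula is over `α`. -/
def residualB (δ : β → Bool) : PropForm (α ⊕ β) → PropForm α
  | tr => tr
  | fls => fls
  | atom (Sum.inl a) => atom a
  | atom (Sum.inr b) => if δ b then tr else fls
  | neg φ => mkNeg (residualB δ φ)
  | conj φ ψ => mkConj (residualB δ φ) (residualB δ ψ)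
  | disj φ ψ => mkDisj (residualB δ φ) (residualB δ ψ)

/-- The Shannon expansion `∃[ψ]_B` of `∃B.ψ`: the disjunction, over all total
truth assignments `δ` on the `β`-atoms, of the residuals `ψ|_δ`. -/
noncomputable def shannon [Fintype β] [DecidableEq β] (ψ : PropForm (α ⊕ β)) : PropForm α :=
  bigDisj ((Finset.univ : Finset (β → Bool)).toList.map fun δ => residualB δ ψ)

/-- The combined partial assignment `μ∪δ` on `α ⊕ β` of a partial assignment
`μ` on `α` and a total assignment `δ` on `β`. -/
def combine (μ : α → Option Bool) (δ : β → Bool) : α ⊕ β → Option Bool :=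
  Sum.elim μ (fun b => some (δ b))

end PropForm

open PropForm

/-- The tautology-free CNF formula `ψ = (B₁ ∨ B₂) ∧ (¬B₁ ∨ A₁) ∧ (¬B₁ ∨ A₂) ∧
(B₁ ∨ ¬A₁ ∨ ¬A₂) ∧ (¬B₂ ∨ A₁) ∧ (¬B₂ ∨ ¬A₂) ∧ (B₂ ∨ ¬A₁ ∨ A₂)` over `A ∪ B`
with `A = {A₁,A₂}` (`Sum.inl`) and `B = {B₁,B₂}` (`Sum.inr`). -/
def psi19 : PropForm (Fin 2 ⊕ Fin 2) :=
  PropForm.conj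
    (PropForm.disj (PropForm.atom (Sum.inr 0)) (PropForm.atom (Sum.inr 1)))
    (PropForm.conj
      (PropForm.disj (PropForm.neg (PropForm.atom (Sum.inr 0))) (PropForm.atom (Sum.inl 0)))
      (PropForm.conj
        (PropForm.disj (PropForm.neg (PropForm.atom (Sum.inr 0))) (PropForm.atom (Sum.inl 1)))
        (PropForm.conj
          (PropForm.disj (PropForm.atom (Sum.inr 0))
            (PropForm.disj (PropForm.neg (PropForm.atom (Sum.inl 0)))
              (PropForm.neg (PropForm.atom (Sum.inl 1)))))
          (PropForm.conj
            (PropForm.disj (PropForm.neg (PropForm.atom (Sum.inr 1))) (PropForm.atom (Sum.inl 0)))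
            (PropForm.conj
              (PropForm.disj (PropForm.neg (PropForm.atom (Sum.inr 1)))
                (PropForm.neg (PropForm.atom (Sum.inl 1))))
              (PropForm.disj (PropForm.atom (Sum.inr 1))
                (PropForm.disj (PropForm.neg (PropForm.atom (Sum.inl 0)))
                  (PropForm.atom (Sum.inl 1)))))))))


/-!
The matrix `ψ` is equivalent to `A₁ ∧ (B₁ ↔ A₂) ∧ (B₂ ↔ ¬A₂)`: it determines the values of the
`B`-atoms from those of the `A`-atoms. Every total extension of `μ = {A₁ ↦ true}` therefore has a
witness for `B`, but that witness depends on `A₂`, which `μ` leaves open. Since a validating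
assignment entails the formula (residuals are sound), a single `δ` validating `ψ` together with `μ`
would have to work for both values of `A₂`, which is impossible.
-/

namespace PropForm

variable {α : Type}

@[simp]
theorem eval_mkNeg (η : α → Bool) (φ : PropForm α) : eval η (mkNeg φ) = !eval η φ := by
  cases φ <;> rfl

@[simp]
theorem eval_mkConj (η : α → Bool) (φ ψ : PropForm α) :
    eval η (mkConj φ ψ) = (eval η φ && eval η ψ) := by
  cases φ <;> cases ψ <;> simp [mkConj, eval]

@[simp]
theorem eval_mkDisj (η : α → Bool) (φ ψ : PropForm α) :
    eval η (mkDisj φ ψ) = (eval η φ || eval η ψ) := by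
  cases φ <;> cases ψ <;> simp [mkDisj, eval]

theorem eval_residual {μ : α → Option Bool} {η : α → Bool} (h : Extends μ η) (φ : PropForm α) :
    eval η (residual μ φ) = eval η φ := by
  induction φ with
  | tr | fls => rfl
  | atom a =>
    simp only [residual]
    split <;> simp_all [eval, h a]
  | neg φ ih => simp [residual, eval, ih]
  | conj φ ψ ihφ ihψ => simp [residual, eval, ihφ, ihψ]
  | disj φ ψ ihφ ihψ => simp [residual, eval, ihφ, ihψ]

theorem Validates.entails {μ : α → Option Bool} {φ : PropForm α} (h : Validates μ φ) :
    Entails μ φ := fun η hη => by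
  rw [← eval_residual hη, h, eval]

theorem Extends.combine {β : Type} {μ : α → Option Bool} {η : α → Bool} (h : Extends μ η)
    (δ : β → Bool) : Extends (combine μ δ) (Sum.elim η δ) := by
  rintro (a | b) v hv
  · exact h a v hv
  · exact Option.some_injective _ hv

end PropForm

open PropForm

theorem eval_psi19_eq_true_iff (η δ : Fin 2 → Bool) :
    eval (Sum.elim η δ) psi19 = true ↔ η 0 = true ∧ δ 0 = η 1 ∧ δ 1 = !η 1 := by
  cases ha₁ : η 0 <;> cases ha₂ : η 1 <;> cases hb₁ : δ 0 <;> cases hb₂ : δ 1 <;>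
    simp [psi19, eval, ha₁, ha₂, hb₁, hb₂]

theorem isCNF_psi19 : IsCNF psi19 := by
  repeat' first
    | exact IsClause.lit trivial
    | apply IsCNF.conj
    | apply IsCNF.clause
    | apply IsClause.disj

theorem tautologyFree_psi19 : TautologyFree psi19 := by
  simp [TautologyFree, psi19, clauses, lits]

theorem extends_A₁_true (x : Bool) :
    Extends (fun i : Fin 2 => if i = 0 then some true else none) ![true, x] := by
  intro i v hv
  fin_cases i <;> simp_all

/-- For existentially quantified formulas, validation is strictly
stronger than entailment even for tautology-free CNF matrices: `ψ` above is a
tautology-free CNF formula and `μ = {A₁ ↦ true}` entails `∃B.ψ`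
(for every total `η` extending `μ` there is a total `δ` on `B` with
`η∪δ ⊨ ψ`), but `μ` does not validate `∃B.ψ` (no total `δ` on `B` makes
`μ∪δ` validate `ψ`). -/
theorem entails_but_not_validates_exists :
    IsCNF psi19 ∧ TautologyFree psi19 ∧
    (∀ η : Fin 2 → Bool,
        Extends (fun i : Fin 2 => if i = 0 then some true else none) η →
          ∃ δ : Fin 2 → Bool, eval (Sum.elim η δ) psi19 = true) ∧
    ¬ ∃ δ : Fin 2 → Bool,
        Validates (combine (fun i : Fin 2 => if i = 0 then some true else none) δ) psi19 := by
  refine ⟨isCNF_psi19, tautologyFree_psi19, fun η hη => ?_, ?_⟩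
  · exact ⟨![η 1, !η 1], (eval_psi19_eq_true_iff η _).2 ⟨hη 0 true rfl, rfl, rfl⟩⟩
  · rintro ⟨δ, hδ⟩
    -- setting `A₂ := ¬B₁` violates `B₁ ↔ A₂`
    have hsat := hδ.entails _ ((extends_A₁_true (!δ 0)).combine δ)
    obtain ⟨-, hflip, -⟩ := (eval_psi19_eq_true_iff _ δ).1 hsat
    simp at hflip
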